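/- arXiv:1705.10119 — 5 statements merged into one kernel-verified Lean document; each statement's English description precedes it below -/
import Mathlib

section
/- Fix λ > 0. Let V be the (finite-dimensional) linear span of the vectors k(z^p_1), …, k(z^p_{n_p}), k(z^q_1), …, k(z^q_{n_q}), and let P denote the orthogonal projection of H onto V. Then for every f ∈ H with f ∉ V one has F_λ(P f) < F_λ(f); consequently, every minimizer of F_λ over H lies in V, i.e., has the form Σ_{i=1}^{n_p} α_i k(z^p_i) + Σ_{j=1}^{n_q} β_j k(z^q_j) for some real coefficients α, β. (Proposition 1, representer theorem for regularized density ratio estimation.) -/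
/-!
Write `f = P f + (f - P f)` with `f - P f ⊥ V`. Every sample feature vector lies in `V`, so the
empirical loss only sees `f` through inner products that `P` does not change, while by Pythagoras
`‖P f‖ < ‖f‖` as soon as `f ∉ V`. Hence the regulariser strictly decreases under `P`, and a
minimizer cannot lie outside `V`.
-/

section OrthogonalDecomposition

variable {H : Type*} [NormedAddCommGroup H] [InnerProductSpace ℝ H] {V : Submodule ℝ H} {f g : H}

theorem inner_left_eq_of_sub_mem_orthogonal (hfg : f - g ∈ Vᗮ) {v : H} (hv : v ∈ V) :
    inner ℝ g v = inner ℝ f v := by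
  have h : inner ℝ (f - g) v = 0 := Submodule.inner_left_of_mem_orthogonal hv hfg
  rw [inner_sub_left, sub_eq_zero] at h
  exact h.symm

theorem norm_lt_of_sub_mem_orthogonal (hg : g ∈ V) (hfg : f - g ∈ Vᗮ) (hf : f ∉ V) :
    ‖g‖ < ‖f‖ := by
  have hne : f - g ≠ 0 := fun h => hf (sub_eq_zero.mp h ▸ hg)
  have hpyth : ‖f‖ ^ 2 = ‖g‖ ^ 2 + ‖f - g‖ ^ 2 := by
    have horth : inner ℝ g (f - g) = 0 := Submodule.inner_right_of_mem_orthogonal hg hfg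
    have h := norm_add_sq_real g (f - g)
    rw [add_sub_cancel, horth] at h
    linarith
  have hpos : 0 < ‖f - g‖ ^ 2 := by positivity
  exact lt_of_pow_lt_pow_left₀ 2 (norm_nonneg f) (by linarith)

end OrthogonalDecomposition

theorem Submodule.exists_eq_sum_smul_add_sum_smul_of_mem_span_range_union_range
    {R M ι κ : Type*} [Semiring R] [AddCommMonoid M] [Module R M] [Fintype ι] [Fintype κ]
    {a : ι → M} {b : κ → M} {x : M} (hx : x ∈ Submodule.span R (Set.range a ∪ Set.range b)) :
    ∃ (α : ι → R) (β : κ → R), x = ∑ i, α i • a i + ∑ j, β j • b j := by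
  rw [Submodule.span_union, Submodule.mem_sup] at hx
  obtain ⟨y, hy, z, hz, rfl⟩ := hx
  obtain ⟨α, rfl⟩ := Submodule.mem_span_range_iff_exists_fun R |>.mp hy
  obtain ⟨β, rfl⟩ := Submodule.mem_span_range_iff_exists_fun R |>.mp hz
  exact ⟨α, β, rfl⟩

theorem stmt_0_general
    {H : Type*} [NormedAddCommGroup H] [InnerProductSpace ℝ H]
    {Z : Type*} (k : Z → H)
    (np nq : ℕ)
    (zp : Fin np → Z) (zq : Fin nq → Z)
    (lam : ℝ) (hlam : 0 < lam)
    (J F : H → ℝ)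
    (hJ : ∀ f : H, J f = (1 / (2 * (np : ℝ))) * ∑ i, (inner ℝ f (k (zp i)) : ℝ) ^ 2
        - (1 / (nq : ℝ)) * ∑ j, (inner ℝ f (k (zq j)) : ℝ))
    (hF : ∀ f : H, F f = J f + (lam / 2) * ‖f‖ ^ 2)
    (V : Submodule ℝ H)
    (hV : V = Submodule.span ℝ
      (Set.range (fun i => k (zp i)) ∪ Set.range (fun j => k (zq j))))
    (P : H → H)
    (hP : ∀ f : H, P f ∈ V ∧ f - P f ∈ Vᗮ) :
    (∀ f : H, f ∉ V → F (P f) < F f) ∧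
      (∀ f : H, (∀ g : H, F f ≤ F g) →
        ∃ (α : Fin np → ℝ) (β : Fin nq → ℝ),
          f = ∑ i, α i • k (zp i) + ∑ j, β j • k (zq j)) := by
  have hkp : ∀ i, k (zp i) ∈ V := fun i => hV ▸ Submodule.subset_span (Or.inl ⟨i, rfl⟩)
  have hkq : ∀ j, k (zq j) ∈ V := fun j => hV ▸ Submodule.subset_span (Or.inr ⟨j, rfl⟩)
  have hJP : ∀ f, J (P f) = J f := fun f => by
    simp only [hJ, inner_left_eq_of_sub_mem_orthogonal (hP f).2 (hkp _),
      inner_left_eq_of_sub_mem_orthogonal (hP f).2 (hkq _)]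
  have hdecrease : ∀ f, f ∉ V → F (P f) < F f := fun f hf => by
    have hnorm := norm_lt_of_sub_mem_orthogonal (hP f).1 (hP f).2 hf
    rw [hF, hF, hJP, add_lt_add_iff_left]
    gcongr
  refine ⟨hdecrease, fun f hmin => ?_⟩
  have hfV : f ∈ V := by_contra fun hf => (hmin (P f)).not_gt (hdecrease f hf)
  rw [hV] at hfV
  exact Submodule.exists_eq_sum_smul_add_sum_smul_of_mem_span_range_union_range hfV

/-- **Proposition 1, representer theorem for regularized DRE.**
Let `H` be a real inner product space, `k : Z → H` a kernel feature map, and fix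
sample points `zp : Fin np → Z`, `zq : Fin nq → Z` with `np, nq ≥ 1`.  Let
`J f = (1/(2 np)) ∑ i, ⟪f, k (zp i)⟫² − (1/nq) ∑ j, ⟪f, k (zq j)⟫` and
`F f = J f + (λ/2) ‖f‖²` with `λ > 0`.  Let `V` be the span of the sample feature
vectors and `P` the orthogonal projection of `H` onto `V` (characterized by
`P f ∈ V` and `f − P f ∈ Vᗮ`).  Then for every `f ∉ V` one has `F (P f) < F f`;
consequently every minimizer of `F` over `H` lies in `V`, i.e. has the form
`∑ i, α i • k (zp i) + ∑ j, β j • k (zq j)`. -/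
theorem stmt_0
    {H : Type*} [NormedAddCommGroup H] [InnerProductSpace ℝ H]
    {Z : Type*} (k : Z → H)
    (np nq : ℕ) (hnp : 1 ≤ np) (hnq : 1 ≤ nq)
    (zp : Fin np → Z) (zq : Fin nq → Z)
    (lam : ℝ) (hlam : 0 < lam)
    (J F : H → ℝ)
    (hJ : ∀ f : H, J f = (1 / (2 * (np : ℝ))) * ∑ i, (inner ℝ f (k (zp i)) : ℝ) ^ 2
        - (1 / (nq : ℝ)) * ∑ j, (inner ℝ f (k (zq j)) : ℝ))
    (hF : ∀ f : H, F f = J f + (lam / 2) * ‖f‖ ^ 2)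
    (V : Submodule ℝ H)
    (hV : V = Submodule.span ℝ
      (Set.range (fun i => k (zp i)) ∪ Set.range (fun j => k (zq j))))
    (P : H → H)
    (hP : ∀ f : H, P f ∈ V ∧ f - P f ∈ Vᗮ) :
    (∀ f : H, f ∉ V → F (P f) < F f) ∧
      (∀ f : H, (∀ g : H, F f ≤ F g) →
        ∃ (α : Fin np → ℝ) (β : Fin nq → ℝ),
          f = ∑ i, α i • k (zp i) + ∑ j, β j • k (zq j)) :=
  stmt_0_general k np nq zp zq lam hlam J F hJ hF V hV P hP
end

section
/- Assume λ > 0 and that K_p is symmetric positive semidefinite, so that (1/n_p) K_p + λ I is invertible. Then the coefficients β* = (1/(λ n_q)) 𝟙 and α* = −(1/(λ n_p n_q)) ((1/n_p) K_p + λ I)⁻¹ K_{pq} 𝟙 satisfy the two stationarity equations of L: ((1/n_p) K_p K_{pq} + λ K_{pq}) β* + K_p ((1/n_p) K_p + λ I) α* = (1/n_q) K_{pq} 𝟙 and ((1/n_p) K_{pq}ᵀ K_{pq} + λ K_q) β* + K_{pq}ᵀ ((1/n_p) K_p + λ I) α* = (1/n_q) K_q 𝟙. -/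
open Matrix

/-
With `M = (1/n_p) K_p + λ I`, the choice of `α*` says exactly `M α* = −(1/(λ n_p n_q)) K_{pq} 𝟙`.
Both stationarity equations have the shape `(c P B + λ Q) (t 𝟙) + P M α = d Q 𝟙`; substituting
`M α*` turns the left side into `(c t − s) P B 𝟙 + λ t Q 𝟙`, and the scalars are matched so that
`c t = s` and `λ t = d`.
-/

theorem stationary_of_mulVec_eq {R k m n : Type*} [CommRing R] [Fintype m] [Fintype n]
    [DecidableEq m] (A : Matrix m m R) (B : Matrix m n R) (P : Matrix k m R) (Q : Matrix k n R)
    {c μ s t d : R} (v : n → R) {α : m → R}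
    (hα : (c • A + μ • 1) *ᵥ α = -(s • (B *ᵥ v))) (hd : μ * t = d) (hs : c * t = s) :
    (c • (P * B) + μ • Q) *ᵥ (t • v) + (P * (c • A + μ • 1)) *ᵥ α = d • (Q *ᵥ v) := by
  rw [← mulVec_mulVec, hα, ← hd, ← hs]
  simp only [add_mulVec, smul_mulVec, mulVec_smul, mulVec_neg, ← mulVec_mulVec]
  module

theorem stmt_3_general
    (np nq : ℕ)
    (Kp : Matrix (Fin np) (Fin np) ℝ)
    (Kq : Matrix (Fin nq) (Fin nq) ℝ)
    (Kpq : Matrix (Fin np) (Fin nq) ℝ)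
    (lam : ℝ) (hlam : 0 < lam)
    (hKp : Kp.PosSemidef)
    (βs : Fin nq → ℝ)
    (hβ : βs = (1 / (lam * (nq : ℝ))) • (1 : Fin nq → ℝ))
    (αs : Fin np → ℝ)
    (hα : αs = -((1 / (lam * (np : ℝ) * (nq : ℝ))) •
      (((1 / (np : ℝ)) • Kp + lam • (1 : Matrix (Fin np) (Fin np) ℝ))⁻¹ *ᵥ
        (Kpq *ᵥ (1 : Fin nq → ℝ))))) :
    IsUnit ((1 / (np : ℝ)) • Kp + lam • (1 : Matrix (Fin np) (Fin np) ℝ)).det ∧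
    ((1 / (np : ℝ)) • (Kp * Kpq) + lam • Kpq) *ᵥ βs
        + (Kp * ((1 / (np : ℝ)) • Kp + lam • (1 : Matrix (Fin np) (Fin np) ℝ))) *ᵥ αs
      = (1 / (nq : ℝ)) • (Kpq *ᵥ (1 : Fin nq → ℝ)) ∧
    ((1 / (np : ℝ)) • (Kpqᵀ * Kpq) + lam • Kq) *ᵥ βs
        + (Kpqᵀ * ((1 / (np : ℝ)) • Kp + lam • (1 : Matrix (Fin np) (Fin np) ℝ))) *ᵥ αs
      = (1 / (nq : ℝ)) • (Kq *ᵥ (1 : Fin nq → ℝ)) := by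
  set M := (1 / (np : ℝ)) • Kp + lam • (1 : Matrix (Fin np) (Fin np) ℝ)
  have hM : M.PosDef :=
    PosDef.posSemidef_add (hKp.smul (by positivity : (0 : ℝ) ≤ 1 / np)) (PosDef.one.smul hlam)
  have hdet : IsUnit M.det := hM.det_pos.ne'.isUnit
  have hMα : M *ᵥ αs = -((1 / (lam * np * nq)) • (Kpq *ᵥ 1)) := by
    rw [hα, mulVec_neg, mulVec_smul, mulVec_mulVec, mul_nonsing_inv _ hdet, one_mulVec]
  have hd : lam * (1 / (lam * nq)) = 1 / (nq : ℝ) := by field_simp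
  have hs : 1 / (np : ℝ) * (1 / (lam * nq)) = 1 / (lam * np * nq) := by ring
  subst hβ
  exact ⟨hdet, stationary_of_mulVec_eq Kp Kpq Kp Kpq 1 hMα hd hs,
    stationary_of_mulVec_eq Kp Kpq Kpqᵀ Kq 1 hMα hd hs⟩

/-- Assume `λ > 0` and that `K_p` is symmetric positive
semidefinite, so that `(1/n_p) K_p + λ I` is invertible.  Then
`β* = (1/(λ n_q)) 𝟙` and `α* = −(1/(λ n_p n_q)) ((1/n_p) K_p + λ I)⁻¹ K_{pq} 𝟙`
satisfy the two stationarity equations of `L`: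
`((1/n_p) K_p K_{pq} + λ K_{pq}) β* + K_p ((1/n_p) K_p + λ I) α* = (1/n_q) K_{pq} 𝟙`
and
`((1/n_p) K_{pq}ᵀ K_{pq} + λ K_q) β* + K_{pq}ᵀ ((1/n_p) K_p + λ I) α* = (1/n_q) K_q 𝟙`. -/
theorem stmt_3
    (np nq : ℕ) (hnp : 1 ≤ np) (hnq : 1 ≤ nq)
    (Kp : Matrix (Fin np) (Fin np) ℝ)
    (Kq : Matrix (Fin nq) (Fin nq) ℝ)
    (Kpq : Matrix (Fin np) (Fin nq) ℝ)
    (lam : ℝ) (hlam : 0 < lam)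
    (hKp : Kp.PosSemidef)
    (βs : Fin nq → ℝ)
    (hβ : βs = (1 / (lam * (nq : ℝ))) • (1 : Fin nq → ℝ))
    (αs : Fin np → ℝ)
    (hα : αs = -((1 / (lam * (np : ℝ) * (nq : ℝ))) •
      (((1 / (np : ℝ)) • Kp + lam • (1 : Matrix (Fin np) (Fin np) ℝ))⁻¹ *ᵥ
        (Kpq *ᵥ (1 : Fin nq → ℝ))))) :
    IsUnit ((1 / (np : ℝ)) • Kp + lam • (1 : Matrix (Fin np) (Fin np) ℝ)).det ∧
    ((1 / (np : ℝ)) • (Kp * Kpq) + lam • Kpq) *ᵥ βs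
        + (Kp * ((1 / (np : ℝ)) • Kp + lam • (1 : Matrix (Fin np) (Fin np) ℝ))) *ᵥ αs
      = (1 / (nq : ℝ)) • (Kpq *ᵥ (1 : Fin nq → ℝ)) ∧
    ((1 / (np : ℝ)) • (Kpqᵀ * Kpq) + lam • Kq) *ᵥ βs
        + (Kpqᵀ * ((1 / (np : ℝ)) • Kp + lam • (1 : Matrix (Fin np) (Fin np) ℝ))) *ᵥ αs
      = (1 / (nq : ℝ)) • (Kq *ᵥ (1 : Fin nq → ℝ)) :=
  stmt_3_general np nq Kp Kq Kpq lam hlam hKp βs hβ αs hα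
end

section
/- Assume λ > 0 and suppose there exists a vector v ∈ ℝ^{n_p} with K_p v = 0 and K_{pq}ᵀ v ≠ 0. Then L is unbounded below: for every c ∈ ℝ there exist α ∈ ℝ^{n_p} and β ∈ ℝ^{n_q} with L(α, β) < c. (This makes precise the paper's claim that if K_p has a zero eigenvalue then the objective L(α, β) is not bounded below.) -/
open Matrix

/-- Assume `λ > 0` and suppose there exists `v ∈ ℝ^{n_p}` with
`K_p v = 0` and `K_{pq}ᵀ v ≠ 0`.  Then `L` is unbounded below: for every `c ∈ ℝ`
there exist `α, β` with `L α β < c`.  (This makes precise the paper's claim that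
if `K_p` has a zero eigenvalue then the objective `L` is not bounded below.) -/
theorem stmt_5
    (np nq : ℕ) (hnp : 1 ≤ np) (hnq : 1 ≤ nq)
    (Kp : Matrix (Fin np) (Fin np) ℝ)
    (Kq : Matrix (Fin nq) (Fin nq) ℝ)
    (Kpq : Matrix (Fin np) (Fin nq) ℝ)
    (lam : ℝ) (hlam : 0 < lam)
    (L : (Fin np → ℝ) → (Fin nq → ℝ) → ℝ)
    (hL : ∀ α β, L α β =
      (1 / (2 * (np : ℝ))) * ((Kp *ᵥ α) ⬝ᵥ (Kp *ᵥ α) + (Kpq *ᵥ β) ⬝ᵥ (Kpq *ᵥ β)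
          + 2 * (α ⬝ᵥ ((Kp * Kpq) *ᵥ β)))
        - (1 / (nq : ℝ)) * (α ⬝ᵥ (Kpq *ᵥ (1 : Fin nq → ℝ)) + β ⬝ᵥ (Kq *ᵥ (1 : Fin nq → ℝ)))
        + (lam / 2) * (α ⬝ᵥ (Kp *ᵥ α) + β ⬝ᵥ (Kq *ᵥ β) + 2 * (α ⬝ᵥ (Kpq *ᵥ β))))
    (v : Fin np → ℝ) (hv₁ : Kp *ᵥ v = 0) (hv₂ : Kpqᵀ *ᵥ v ≠ 0) :
    ∀ c : ℝ, ∃ (α : Fin np → ℝ) (β : Fin nq → ℝ), L α β < c := by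
  intro c
  -- slope of t ↦ L (α₀ + t • v) β₀
  set D : (Fin np → ℝ) → (Fin nq → ℝ) → ℝ := fun α₀ β₀ =>
    (1 / (2 * (np : ℝ))) * (2 * (v ⬝ᵥ ((Kp * Kpq) *ᵥ β₀)))
      - (1 / (nq : ℝ)) * (v ⬝ᵥ (Kpq *ᵥ (1 : Fin nq → ℝ)))
      + (lam / 2) * (v ⬝ᵥ (Kp *ᵥ α₀) + 2 * (v ⬝ᵥ (Kpq *ᵥ β₀))) with hD
  have key : ∀ (α₀ : Fin np → ℝ) (β₀ : Fin nq → ℝ) (t : ℝ),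
      L (α₀ + t • v) β₀ = L α₀ β₀ + t * D α₀ β₀ := by
    intro α₀ β₀ t
    rw [hL, hL, hD]
    simp only [mulVec_add, mulVec_smul, hv₁, smul_zero, add_zero,
      add_dotProduct, smul_dotProduct, dotProduct_add, dotProduct_smul,
      dotProduct_zero, zero_dotProduct, smul_eq_mul]
    ring
  -- find α₀, β₀ with nonzero slope
  have pos : ∀ {m : ℕ} (w : Fin m → ℝ), w ≠ 0 → 0 < w ⬝ᵥ w := by
    intro m w hw
    have h0 : 0 ≤ w ⬝ᵥ w := by
      rw [dotProduct]; exact Finset.sum_nonneg fun i _ => mul_self_nonneg _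
    exact lt_of_le_of_ne h0 (Ne.symm ((dotProduct_self_eq_zero).not.mpr hw))
  have hwit : ∃ (α₀ : Fin np → ℝ) (β₀ : Fin nq → ℝ), D α₀ β₀ ≠ 0 := by
    by_cases h1 : (1 / (nq : ℝ)) * (v ⬝ᵥ (Kpq *ᵥ (1 : Fin nq → ℝ))) = 0
    · by_cases h2 : Kpᵀ *ᵥ v = 0
      · refine ⟨0, Kpqᵀ *ᵥ v, ?_⟩
        have e1 : v ⬝ᵥ ((Kp * Kpq) *ᵥ (Kpqᵀ *ᵥ v)) = 0 := by
          rw [← mulVec_mulVec, dotProduct_mulVec, ← mulVec_transpose, h2, zero_dotProduct]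
        have e2 : v ⬝ᵥ (Kpq *ᵥ (Kpqᵀ *ᵥ v)) = (Kpqᵀ *ᵥ v) ⬝ᵥ (Kpqᵀ *ᵥ v) := by
          rw [dotProduct_mulVec, ← mulVec_transpose, dotProduct_comm]
        have e3 : (0:ℝ) < (Kpqᵀ *ᵥ v) ⬝ᵥ (Kpqᵀ *ᵥ v) := pos _ hv₂
        rw [hD]
        simp only [mulVec_zero, dotProduct_zero, e1, e2, mul_zero, add_zero, h1, sub_zero,
          zero_add]
        positivity
      · refine ⟨Kpᵀ *ᵥ v, 0, ?_⟩
        have e2 : v ⬝ᵥ (Kp *ᵥ (Kpᵀ *ᵥ v)) = (Kpᵀ *ᵥ v) ⬝ᵥ (Kpᵀ *ᵥ v) := by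
          rw [dotProduct_mulVec, ← mulVec_transpose, dotProduct_comm]
        have e3 : (0:ℝ) < (Kpᵀ *ᵥ v) ⬝ᵥ (Kpᵀ *ᵥ v) := pos _ h2
        rw [hD]
        simp only [mulVec_zero, dotProduct_zero, mul_zero, add_zero, h1, sub_zero, e2]
        positivity
    · refine ⟨0, 0, ?_⟩
      rw [hD]
      simp only [mulVec_zero, dotProduct_zero, mul_zero, add_zero, zero_sub, zero_add]
      simpa using h1
  obtain ⟨α₀, β₀, hDne⟩ := hwit
  refine ⟨α₀ + ((c - 1 - L α₀ β₀) / D α₀ β₀) • v, β₀, ?_⟩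
  rw [key]
  rw [div_mul_cancel₀ _ hDne]
  linarith
end

section
/- Assume λ > 0 and that the vectors k(z^p_1), …, k(z^p_{n_p}), k(z^q_1), …, k(z^q_{n_q}) are linearly independent in H. Then with β* = (1/(λ n_q)) 𝟙 and α* = −(1/(λ n_p n_q)) ((1/n_p) K_p + λ I)⁻¹ K_{pq} 𝟙, the element r̂* = Σ_{i=1}^{n_p} α*_i k(z^p_i) + Σ_{j=1}^{n_q} β*_j k(z^q_j) is the unique global minimizer of F_λ over H, i.e., F_λ(r̂*) < F_λ(f) for every f ∈ H with f ≠ r̂*. -/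
/-!
The objective is a quadratic functional `f ↦ (c/2) ∑ ⟪f, u i⟫² - ⟪f, v⟫ + (λ/2)‖f‖²` with
`c ≥ 0`, so around any point `r` it expands as `F (r + g) = F r + ⟪∇F r, g⟫ + Q g` with
`Q g ≥ (λ/2)‖g‖² > 0` for `g ≠ 0`. Hence a stationary point is the unique strict minimizer.
For `r̂* = ∑ α*_i k(z^p_i) + ∑ β*_j k(z^q_j)` the gradient is again a combination of the
sample vectors, whose coefficients are `((1/n_p) K_p + λ I) α* + (1/n_p) K_{pq} β*` and
`λ β* - (1/n_q) 𝟙`; both vanish by the choice of `α*`, `β*`, the matrix being invertible because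
it is a positive multiple of the identity plus a positive semidefinite Gram matrix.
-/

open Matrix RealInnerProductSpace

section QuadraticObjective

variable {H : Type*} [NormedAddCommGroup H] [InnerProductSpace ℝ H] {ι κ : Type*} [Fintype ι]
  [Fintype κ]

/-- `F_λ` is `quadObjective (1 / n_p) λ (k ∘ z^p) ((1 / n_q) • ∑ j, k (z^q_j))`. -/
noncomputable def quadObjective (c lam : ℝ) (u : ι → H) (v f : H) : ℝ :=
  c / 2 * ∑ i, ⟪f, u i⟫ ^ 2 - ⟪f, v⟫ + lam / 2 * ‖f‖ ^ 2

theorem quadObjective_add (c lam : ℝ) (u : ι → H) (v r g : H) :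
    quadObjective c lam u v (r + g) = quadObjective c lam u v r
      + ⟪c • ∑ i, ⟪r, u i⟫ • u i + lam • r - v, g⟫
      + (c / 2 * ∑ i, ⟪g, u i⟫ ^ 2 + lam / 2 * ‖g‖ ^ 2) := by
  simp only [quadObjective, inner_sub_left, inner_add_left, inner_smul_left, sum_inner,
    RCLike.conj_to_real, norm_add_sq_real, add_sq, Finset.sum_add_distrib, mul_assoc,
    ← Finset.mul_sum]
  simp only [real_inner_comm g]
  ring

theorem quadObjective_lt_of_stationary {c lam : ℝ} (hc : 0 ≤ c) (hlam : 0 < lam) {u : ι → H}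
    {v r f : H} (hr : c • ∑ i, ⟪r, u i⟫ • u i + lam • r = v) (hf : f ≠ r) :
    quadObjective c lam u v r < quadObjective c lam u v f := by
  have hg : 0 < ‖f - r‖ := norm_pos_iff.2 (sub_ne_zero.2 hf)
  have hcurv : 0 < c / 2 * ∑ i, ⟪f - r, u i⟫ ^ 2 + lam / 2 * ‖f - r‖ ^ 2 := by positivity
  rw [← add_sub_cancel r f, quadObjective_add, hr, sub_self, inner_zero_left]
  linarith

theorem inner_sum_smul_add_sum_smul_eq_mulVec {u : ι → H} {w : κ → H} {A : Matrix ι ι ℝ}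
    {B : Matrix ι κ ℝ} (hA : ∀ i i', A i i' = ⟪u i, u i'⟫) (hB : ∀ i j, B i j = ⟪u i, w j⟫)
    (α : ι → ℝ) (β : κ → ℝ) (i : ι) :
    ⟪∑ i', α i' • u i' + ∑ j, β j • w j, u i⟫ = (A *ᵥ α + B *ᵥ β) i := by
  rw [real_inner_comm]
  simp only [inner_add_right, inner_sum, inner_smul_right, Pi.add_apply, mulVec, dotProduct, hA,
    hB, mul_comm]

theorem representer_stationary_of_mulVec_eq {c lam b : ℝ} {u : ι → H} {w : κ → H}
    {A : Matrix ι ι ℝ} {B : Matrix ι κ ℝ} (hA : ∀ i i', A i i' = ⟪u i, u i'⟫)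
    (hB : ∀ i j, B i j = ⟪u i, w j⟫)
    {α : ι → ℝ} {β : κ → ℝ} (hα : c • (A *ᵥ α + B *ᵥ β) + lam • α = 0)
    (hβ : lam • β = b • 1) :
    c • ∑ i, ⟪∑ i', α i' • u i' + ∑ j, β j • w j, u i⟫ • u i
      + lam • (∑ i', α i' • u i' + ∑ j, β j • w j) = b • ∑ j, w j := by
  simp only [inner_sum_smul_add_sum_smul_eq_mulVec hA hB, smul_add, Finset.smul_sum, smul_smul]
  rw [← add_assoc, ← Finset.sum_add_distrib]
  simp only [← add_smul]
  have hα' (i : ι) : c * (A *ᵥ α) i + c * (B *ᵥ β) i + lam * α i = 0 := by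
    simpa using congrFun hα i
  have hβ' (j : κ) : lam * β j = b := by simpa using congrFun hβ j
  simp [mul_add, hα', hβ']

end QuadraticObjective

theorem Matrix.PosSemidef.smul_add_smul_one_posDef {n : Type*} [Fintype n] [DecidableEq n]
    {A : Matrix n n ℝ} (hA : A.PosSemidef) {c lam : ℝ} (hc : 0 ≤ c) (hlam : 0 < lam) :
    (c • A + lam • (1 : Matrix n n ℝ)).PosDef :=
  PosDef.posSemidef_add (hA.smul hc) (PosDef.one.smul hlam)

theorem stmt_7_general
    {H : Type*} [NormedAddCommGroup H] [InnerProductSpace ℝ H]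
    {Z : Type*} (k : Z → H)
    (np nq : ℕ)
    (zp : Fin np → Z) (zq : Fin nq → Z)
    (lam : ℝ) (hlam : 0 < lam)
    (J F : H → ℝ)
    (hJ : ∀ f : H, J f = (1 / (2 * (np : ℝ))) * ∑ i, (inner ℝ f (k (zp i)) : ℝ) ^ 2
        - (1 / (nq : ℝ)) * ∑ j, (inner ℝ f (k (zq j)) : ℝ))
    (hF : ∀ f : H, F f = J f + (lam / 2) * ‖f‖ ^ 2)
    (Kp : Matrix (Fin np) (Fin np) ℝ)
    (hKp : ∀ i i', Kp i i' = (inner ℝ (k (zp i)) (k (zp i')) : ℝ))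
    (Kpq : Matrix (Fin np) (Fin nq) ℝ)
    (hKpq : ∀ i j, Kpq i j = (inner ℝ (k (zp i)) (k (zq j)) : ℝ))
    (βs : Fin nq → ℝ)
    (hβ : βs = (1 / (lam * (nq : ℝ))) • (1 : Fin nq → ℝ))
    (αs : Fin np → ℝ)
    (hα : αs = -((1 / (lam * (np : ℝ) * (nq : ℝ))) •
      (((1 / (np : ℝ)) • Kp + lam • (1 : Matrix (Fin np) (Fin np) ℝ))⁻¹ *ᵥ
        (Kpq *ᵥ (1 : Fin nq → ℝ)))))
    (rstar : H)
    (hrstar : rstar = ∑ i, αs i • k (zp i) + ∑ j, βs j • k (zq j)) :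
    ∀ f : H, f ≠ rstar → F rstar < F f := by
  have hFQ :
      F = quadObjective (1 / np) lam (fun i => k (zp i)) ((1 / nq : ℝ) • ∑ j, k (zq j)) := by
    funext f
    rw [hF, hJ, quadObjective, inner_smul_right, inner_sum]
    ring
  have hM : ((1 / (np : ℝ)) • Kp + lam • (1 : Matrix (Fin np) (Fin np) ℝ)).PosDef :=
    have hKpGram : Kp = gram ℝ (fun i => k (zp i)) := Matrix.ext hKp
    (hKpGram ▸ posSemidef_gram ℝ _).smul_add_smul_one_posDef (by positivity) hlam
  have hMα : ((1 / (np : ℝ)) • Kp + lam • 1) *ᵥ αs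
      = -((1 / (lam * np * nq)) • (Kpq *ᵥ 1)) := by
    rw [hα, mulVec_neg, mulVec_smul, mulVec_mulVec,
      mul_nonsing_inv _ ((isUnit_iff_isUnit_det _).1 hM.isUnit), one_mulVec]
  have hstatα : (1 / (np : ℝ)) • (Kp *ᵥ αs + Kpq *ᵥ βs) + lam • αs = 0 := by
    rw [add_mulVec, smul_mulVec, smul_mulVec, one_mulVec] at hMα
    rw [smul_add, add_right_comm, hMα, hβ, mulVec_smul, smul_smul,
      show 1 / (np : ℝ) * (1 / (lam * nq)) = 1 / (lam * np * nq) by ring, neg_add_cancel]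
  have hstatβ : lam • βs = (1 / nq : ℝ) • 1 := by
    rw [hβ, smul_smul]
    congr 1
    field_simp
  intro f hf
  rw [hFQ, hrstar]
  exact quadObjective_lt_of_stationary (by positivity) hlam
    (representer_stationary_of_mulVec_eq hKp hKpq hstatα hstatβ) (hrstar ▸ hf)

/-- Assume `λ > 0` and that the sample feature vectors
`k (zp 1), …, k (zp n_p), k (zq 1), …, k (zq n_q)` are linearly independent in
`H`.  Then with `β* = (1/(λ n_q)) 𝟙` and
`α* = −(1/(λ n_p n_q)) ((1/n_p) K_p + λ I)⁻¹ K_{pq} 𝟙`, the element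
`r̂* = ∑ i, α*_i • k (zp i) + ∑ j, β*_j • k (zq j)` is the unique global minimizer
of `F` over `H`: `F r̂* < F f` for every `f ≠ r̂*`. -/
theorem stmt_7
    {H : Type*} [NormedAddCommGroup H] [InnerProductSpace ℝ H]
    {Z : Type*} (k : Z → H)
    (np nq : ℕ) (hnp : 1 ≤ np) (hnq : 1 ≤ nq)
    (zp : Fin np → Z) (zq : Fin nq → Z)
    (lam : ℝ) (hlam : 0 < lam)
    (hind : LinearIndependent ℝ
      (Sum.elim (fun i : Fin np => k (zp i)) (fun j : Fin nq => k (zq j))))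
    (J F : H → ℝ)
    (hJ : ∀ f : H, J f = (1 / (2 * (np : ℝ))) * ∑ i, (inner ℝ f (k (zp i)) : ℝ) ^ 2
        - (1 / (nq : ℝ)) * ∑ j, (inner ℝ f (k (zq j)) : ℝ))
    (hF : ∀ f : H, F f = J f + (lam / 2) * ‖f‖ ^ 2)
    (Kp : Matrix (Fin np) (Fin np) ℝ)
    (hKp : ∀ i i', Kp i i' = (inner ℝ (k (zp i)) (k (zp i')) : ℝ))
    (Kpq : Matrix (Fin np) (Fin nq) ℝ)
    (hKpq : ∀ i j, Kpq i j = (inner ℝ (k (zp i)) (k (zq j)) : ℝ))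
    (βs : Fin nq → ℝ)
    (hβ : βs = (1 / (lam * (nq : ℝ))) • (1 : Fin nq → ℝ))
    (αs : Fin np → ℝ)
    (hα : αs = -((1 / (lam * (np : ℝ) * (nq : ℝ))) •
      (((1 / (np : ℝ)) • Kp + lam • (1 : Matrix (Fin np) (Fin np) ℝ))⁻¹ *ᵥ
        (Kpq *ᵥ (1 : Fin nq → ℝ)))))
    (rstar : H)
    (hrstar : rstar = ∑ i, αs i • k (zp i) + ∑ j, βs j • k (zq j)) :
    ∀ f : H, f ≠ rstar → F rstar < F f :=
  stmt_7_general k np nq zp zq lam hlam J F hJ hF Kp hKp Kpq hKpq βs hβ αs hα rstar hrstar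
end

section
/- Under the stated hypotheses, the gradient of the KL divergence with respect to the variational parameter ignores the dependence of the density ratio on the parameter: the derivative at θ₀ of θ ↦ ∫ q(θ, z) log(q(θ, z)/p(z)) dμ(z) equals the derivative at θ₀ of θ ↦ ∫ q(θ, z) log(q(θ₀, z)/p(z)) dμ(z), and both equal ∫ ∂_θ q(θ₀, z) log(q(θ₀, z)/p(z)) dμ(z). (Appendix C: ∇_φ KL(q_φ‖p) = −∇_φ E_{q_φ} log(p/q), with the ratio held fixed at the current parameter.) -/
/-!
Differentiating under the integral sign, the derivative of the KL integral is
`∫ (q' log (q / p) + q')`, and the extra term `∫ q'` is the derivative of the constant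
`θ ↦ ∫ q θ = 1`, hence zero. The domination hypotheses bound the derivative for each `θ` only
for almost every `z`; applying Fubini to a jointly measurable version of the derivative turns
this into a bound for almost every `z` and almost every `θ`, which by the fundamental theorem of
calculus makes each integrand Lipschitz in `θ`, so dominated differentiation applies.
-/

open MeasureTheory Metric Filter Set Topology
open scoped NNReal Interval

theorem HasDerivAt.tendsto_forward_diff_nat {f : ℝ → ℝ} {f' x : ℝ} (hf : HasDerivAt f f' x) :
    Tendsto (fun n : ℕ => ((n : ℝ) + 1) * (f (x + ((n : ℝ) + 1)⁻¹) - f x)) atTop (𝓝 f') := by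
  have h : Tendsto (fun n : ℕ => ((n : ℝ) + 1)⁻¹) atTop (𝓝[>] 0) :=
    tendsto_nhdsWithin_of_tendsto_nhds_of_eventually_within _
      (by simpa only [one_div] using tendsto_one_div_add_atTop_nhds_zero_nat (𝕜 := ℝ))
      (Eventually.of_forall fun n => by simp only [mem_Ioi]; positivity)
  simpa only [Function.comp_def, inv_inv, smul_eq_mul] using hf.tendsto_slope_zero_right.comp h

theorem lipschitzOnWith_of_hasDerivAt_of_ae_norm_le {f f' : ℝ → ℝ} {s : Set ℝ} {C : ℝ≥0}
    (hs : s.OrdConnected) (hf : ∀ x ∈ s, HasDerivAt f (f' x) x)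
    (hbound : ∀ᵐ x ∂volume.restrict s, ‖f' x‖ ≤ C) : LipschitzOnWith C f s := by
  refine LipschitzOnWith.of_dist_le_mul fun x hx y hy => ?_
  have hsub : Ι y x ⊆ s := uIoc_subset_uIcc.trans (hs.uIcc_subset hy hx)
  have hbound' : ∀ᵐ t ∂volume.restrict (Ι y x), ‖f' t‖ ≤ C :=
    ae_restrict_of_ae_restrict_of_subset hsub hbound
  have hmeas : AEStronglyMeasurable f' (volume.restrict (Ι y x)) := by
    refine (measurable_deriv f).aestronglyMeasurable.congr ?_
    filter_upwards [ae_restrict_mem measurableSet_uIoc] with t ht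
    exact (hf t (hsub ht)).deriv
  have hint : IntervalIntegrable f' volume y x := intervalIntegrable_iff.2 <|
    Integrable.mono' (integrableOn_const measure_Ioc_lt_top.ne) hmeas hbound'
  rw [dist_eq_norm, ← intervalIntegral.integral_eq_sub_of_hasDerivAt
    (fun t ht => hf t (hs.uIcc_subset hy hx ht)) hint, Real.dist_eq]
  exact intervalIntegral.norm_integral_le_of_norm_le_const_ae
    ((ae_restrict_iff' measurableSet_uIoc).1 hbound')

theorem HasDerivAt.mul_log_div_const {f : ℝ → ℝ} {f' x c : ℝ} (hf : HasDerivAt f f' x)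
    (hx : f x ≠ 0) (hc : c ≠ 0) :
    HasDerivAt (fun t => f t * Real.log (f t / c)) (f' * Real.log (f x / c) + f') x := by
  refine (hf.mul ((hf.div_const c).log (div_ne_zero hx hc))).congr_deriv ?_
  field_simp

section

variable {Z : Type*} [MeasurableSpace Z] {μ : Measure Z}

theorem exists_measurable_eq_deriv_on_Ico {F F' : ℝ → Z → ℝ} {a b : ℝ} (hab : a ≤ b)
    (hF : ∀ θ, Measurable (F θ))
    (hderiv : ∀ᵐ z ∂μ, ∀ θ ∈ Icc a b, HasDerivAt (F · z) (F' θ z) θ) :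
    ∃ H : ℝ × Z → ℝ, Measurable H ∧ ∀ᵐ z ∂μ, ∀ θ ∈ Ico a b, H (θ, z) = F' θ z := by
  classical
  set N := toMeasurable μ {z | ¬ ∀ θ ∈ Icc a b, HasDerivAt (F · z) (F' θ z) θ}
  have hN_null : ∀ᵐ z ∂μ, z ∉ N :=
    measure_eq_zero_iff_ae_notMem.1 ((measure_toMeasurable _).trans hderiv)
  -- Freezing `F` outside `[a, b]` and killing it on the null set `N` makes it continuous in `θ`
  -- for every `z`, hence jointly measurable.
  set G : ℝ → Z → ℝ := fun θ z => if z ∈ N then 0 else F (projIcc a b hab θ) z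
  have hG : Measurable (Function.uncurry G) := by
    refine measurable_uncurry_of_continuous_of_measurable (fun z => ?_) (fun θ => ?_)
    · by_cases hz : z ∈ N
      · simp only [G, if_pos hz, continuous_const]
      · have hz' : ∀ θ ∈ Icc a b, HasDerivAt (F · z) (F' θ z) θ := by
          by_contra h
          exact hz (subset_toMeasurable _ _ h)
        simp only [G, if_neg hz]
        exact continuous_iff_continuousAt.2 fun θ =>
          (hz' _ (projIcc a b hab θ).2).continuousAt.comp (f := fun t => (projIcc a b hab t : ℝ))
            (continuous_subtype_val.comp continuous_projIcc).continuousAt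
    · exact Measurable.ite (measurableSet_toMeasurable _ _) measurable_const (hF _)
  refine ⟨fun x => limsup (fun n : ℕ => ((n : ℝ) + 1) *
    (G (x.1 + ((n : ℝ) + 1)⁻¹) x.2 - G x.1 x.2)) atTop, ?_, ?_⟩
  · exact Measurable.limsup fun n => measurable_const.mul
      ((hG.comp ((measurable_fst.add_const _).prodMk measurable_snd)).sub hG)
  · filter_upwards [hN_null, hderiv] with z hz hz' θ hθ
    have hGF : ∀ t ∈ Icc a b, G t z = F t z := fun t ht => by
      simp only [G, if_neg hz, projIcc_of_mem hab ht]
    have hto : Tendsto (fun n : ℕ => θ + ((n : ℝ) + 1)⁻¹) atTop (𝓝 θ) := by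
      simpa only [one_div, add_zero] using
        tendsto_const_nhds.add (tendsto_one_div_add_atTop_nhds_zero_nat (𝕜 := ℝ))
    refine Tendsto.limsup_eq ((hz' θ (Ico_subset_Icc_self hθ)).tendsto_forward_diff_nat.congr' ?_)
    filter_upwards [hto.eventually (Iio_mem_nhds hθ.2)] with n hn
    have hpos : (0 : ℝ) < ((n : ℝ) + 1)⁻¹ := by positivity
    rw [hGF θ (Ico_subset_Icc_self hθ), hGF _ ⟨by linarith [hθ.1], hn.le⟩]

theorem hasDerivAt_integral_of_forall_ae_deriv_le [SFinite μ] {F F' : ℝ → Z → ℝ} {θ₀ ε : ℝ}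
    (hε : 0 < ε) (hF : ∀ θ, Measurable (F θ)) (hF_int : Integrable (F θ₀) μ)
    (hderiv : ∀ᵐ z ∂μ, ∀ θ ∈ ball θ₀ ε, HasDerivAt (F · z) (F' θ z) θ)
    {g : Z → ℝ} (hg : Integrable g μ) (hbound : ∀ θ ∈ ball θ₀ ε, ∀ᵐ z ∂μ, |F' θ z| ≤ g z) :
    Integrable (F' θ₀) μ ∧ HasDerivAt (fun θ => ∫ z, F θ z ∂μ) (∫ z, F' θ₀ z ∂μ) θ₀ := by
  set δ := ε / 2
  have hδ : 0 < δ := half_pos hε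
  have hδε : δ < ε := half_lt_self hε
  have hIcc : Icc (θ₀ - δ) (θ₀ + δ) ⊆ ball θ₀ ε := by
    rw [Real.ball_eq_Ioo]
    exact Icc_subset_Ioo (by linarith) (by linarith)
  obtain ⟨H, hH_meas, hH⟩ := exists_measurable_eq_deriv_on_Ico (by linarith : θ₀ - δ ≤ θ₀ + δ) hF
    (hderiv.mono fun z hz θ hθ => hz θ (hIcc hθ))
  replace hH : ∀ᵐ z ∂μ, ∀ θ ∈ ball θ₀ δ, H (θ, z) = F' θ z := by
    filter_upwards [hH] with z hz θ hθ
    rw [Real.ball_eq_Ioo] at hθ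
    exact hz θ (Ioo_subset_Ico_self hθ)
  set G := hg.1.aemeasurable.mk g
  have hgG : g =ᵐ[μ] G := hg.1.aemeasurable.ae_eq_mk
  have hbound_ae : ∀ᵐ z ∂μ, ∀ᵐ θ ∂volume.restrict (ball θ₀ δ), |H (θ, z)| ≤ G z := by
    refine (Measure.ae_ae_comm (measurableSet_le (f := fun x : Z × ℝ => |H (x.2, x.1)|)
      (g := fun x => G x.1) (hH_meas.comp (measurable_snd.prodMk measurable_fst)).abs
      (hg.1.aemeasurable.measurable_mk.comp measurable_fst))).2 ?_
    filter_upwards [ae_restrict_mem measurableSet_ball] with θ hθ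
    filter_upwards [hbound θ (ball_subset_ball hδε.le hθ), hH, hgG] with z hz hHz hgz
    rw [hHz θ hθ, ← hgz]
    exact hz
  have hlip : ∀ᵐ z ∂μ, LipschitzOnWith (Real.nnabs (g z)) (F · z) (ball θ₀ δ) := by
    filter_upwards [hbound_ae, hH, hgG, hderiv] with z hz hHz hgz hdz
    refine lipschitzOnWith_of_hasDerivAt_of_ae_norm_le (convex_ball θ₀ δ).ordConnected
      (fun θ hθ => hdz θ (ball_subset_ball hδε.le hθ)) ?_
    filter_upwards [hz, ae_restrict_mem measurableSet_ball] with θ hθ hθ_mem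
    rw [Real.norm_eq_abs, Real.coe_nnabs, ← hHz θ hθ_mem]
    exact hθ.trans (hgz ▸ le_abs_self (g z))
  have hF'_meas : AEStronglyMeasurable (F' θ₀) μ :=
    (hH_meas.comp (measurable_const.prodMk measurable_id)).aestronglyMeasurable.congr
      (hH.mono fun z hz => hz θ₀ (mem_ball_self hδ))
  exact hasDerivAt_integral_of_dominated_loc_of_lip (ball_mem_nhds θ₀ hδ)
    (Eventually.of_forall fun θ => (hF θ).aestronglyMeasurable) hF_int hF'_meas hlip hg
    (hderiv.mono fun z hz => hz θ₀ (mem_ball_self hε))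

theorem sigmaFinite_of_integrable_of_pos {f : Z → ℝ} (hf : Integrable f μ) (hpos : ∀ z, 0 < f z) :
    SigmaFinite μ := by
  refine Measure.sigmaFinite_of_countable
    (countable_range fun n : ℕ => {z | 1 / ((n : ℝ) + 1) ≤ f z}) ?_ ?_
  · rintro s ⟨n, rfl⟩
    exact hf.measure_ge_lt_top (by positivity)
  · refine sUnion_range _ ▸ eq_univ_of_forall fun z => mem_iUnion.2 ?_
    obtain ⟨n, hn⟩ := exists_nat_one_div_lt (hpos z)
    exact ⟨n, hn.le⟩

end

/-- **Appendix C.** Under the stated hypotheses, the gradient of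
the KL divergence w.r.t. the variational parameter ignores the dependence of the
density ratio on the parameter: the derivative at `θ₀` of
`θ ↦ ∫ q(θ,z) log(q(θ,z)/p(z)) dμ` equals the derivative at `θ₀` of
`θ ↦ ∫ q(θ,z) log(q(θ₀,z)/p(z)) dμ`, and both equal
`∫ ∂_θ q(θ₀,z) log(q(θ₀,z)/p(z)) dμ`. -/
theorem stmt_11
    {Z : Type*} [MeasurableSpace Z] (μ : Measure Z)
    (p : Z → ℝ) (hp_meas : Measurable p) (hp_pos : ∀ z, 0 < p z)
    (q q' : ℝ → Z → ℝ)
    (hq_meas : ∀ θ, Measurable (q θ))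
    (hq_pos : ∀ θ z, 0 < q θ z)
    (hq_int : ∀ θ, Integrable (q θ) μ)
    (hq_norm : ∀ θ, ∫ z, q θ z ∂μ = 1)
    (θ₀ : ℝ) (ε : ℝ) (hε : 0 < ε)
    (hderiv : ∀ᵐ z ∂μ, ∀ θ ∈ Metric.ball θ₀ ε,
      HasDerivAt (fun t => q t z) (q' θ z) θ)
    (g₀ g₁ g₂ : Z → ℝ)
    (hg₀ : Integrable g₀ μ) (hg₁ : Integrable g₁ μ) (hg₂ : Integrable g₂ μ)
    (hbound₀ : ∀ θ ∈ Metric.ball θ₀ ε, ∀ᵐ z ∂μ, |q' θ z| ≤ g₀ z)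
    (hbound₁ : ∀ θ ∈ Metric.ball θ₀ ε, ∀ᵐ z ∂μ,
      |q' θ z * Real.log (q θ z / p z) + q' θ z| ≤ g₁ z)
    (hbound₂ : ∀ θ ∈ Metric.ball θ₀ ε, ∀ᵐ z ∂μ,
      |q' θ z * Real.log (q θ₀ z / p z)| ≤ g₂ z)
    (hint₁ : ∀ θ ∈ Metric.ball θ₀ ε,
      Integrable (fun z => q θ z * Real.log (q θ z / p z)) μ)
    (hint₂ : ∀ θ ∈ Metric.ball θ₀ ε,
      Integrable (fun z => q θ z * Real.log (q θ₀ z / p z)) μ) :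
    HasDerivAt (fun θ => ∫ z, q θ z * Real.log (q θ z / p z) ∂μ)
        (∫ z, q' θ₀ z * Real.log (q θ₀ z / p z) ∂μ) θ₀ ∧
    HasDerivAt (fun θ => ∫ z, q θ z * Real.log (q θ₀ z / p z) ∂μ)
        (∫ z, q' θ₀ z * Real.log (q θ₀ z / p z) ∂μ) θ₀ := by
  have := sigmaFinite_of_integrable_of_pos (hq_int θ₀) (hq_pos θ₀)
  have hθ₀ : θ₀ ∈ ball θ₀ ε := mem_ball_self hε
  obtain ⟨hq'_int, hq_deriv⟩ :=
    hasDerivAt_integral_of_forall_ae_deriv_le hε hq_meas (hq_int θ₀) hderiv hg₀ hbound₀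
  have hq'_zero : ∫ z, q' θ₀ z ∂μ = 0 :=
    (funext hq_norm ▸ hq_deriv).unique (hasDerivAt_const θ₀ 1)
  obtain ⟨hfixed_int, hfixed_deriv⟩ := hasDerivAt_integral_of_forall_ae_deriv_le
    (F := fun θ z => q θ z * Real.log (q θ₀ z / p z)) hε
    (fun θ => (hq_meas θ).mul ((hq_meas θ₀).div hp_meas).log) (hint₂ θ₀ hθ₀)
    (hderiv.mono fun z hz θ hθ => (hz θ hθ).mul_const _) hg₂ hbound₂
  have hKL_deriv := (hasDerivAt_integral_of_forall_ae_deriv_le hε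
    (fun θ => (hq_meas θ).mul ((hq_meas θ).div hp_meas).log) (hint₁ θ₀ hθ₀)
    (hderiv.mono fun z hz θ hθ => (hz θ hθ).mul_log_div_const (hq_pos θ z).ne' (hp_pos z).ne')
    hg₁ hbound₁).2
  rw [integral_add hfixed_int hq'_int, hq'_zero, add_zero] at hKL_deriv
  exact ⟨hKL_deriv, hfixed_deriv⟩
end
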